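/- The function ρ̂₂(α,β), defined as 2 + 2β − 4α/(2−β) for β ≤ 2−√(2α) and 6 − 4√(2α) for β ≥ 2−√(2α), is well-defined (the two branches agree at β = 2−√(2α)), and for every α ∈ (0,1) and β ∈ (0,1) one has ρ̂₂(α,β) ≥ ρ₂(α,β), consistent with annealed exponents dominating quenched ones. -/

import Mathlib

open Set

/-- The pair-correlation exponent `ρ₂(α,β)`. -/
noncomputable def rho2 (α β : ℝ) : ℝ :=
  if β ≤ 2 * (1 - Real.sqrt α) then 2 + 2 * β - 4 * α / (2 - β)
  else 8 * (1 - Real.sqrt α) - 4 * (1 - Real.sqrt α) ^ 2 / β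

/-- The annealed pair-correlation exponent `ρ̂₂(α,β)`. -/
noncomputable def rhoHat2 (α β : ℝ) : ℝ :=
  if β ≤ 2 - Real.sqrt (2 * α) then 2 + 2 * β - 4 * α / (2 - β)
  else 6 - 4 * Real.sqrt (2 * α)

/-!
Both exponents start with the branch `g(β) = 2 + 2β - 4α/(2-β)` (`rhoLow` below). On `(0,1]` the
second branch of `ρ₂` lies below `g`, because their difference is
`2(1-β)(β-2(1-√α))² / (β(2-β))`. On the other hand `g` is concave with maximum `6 - 4√(2α)` at
`β = 2 - √(2α)` (AM-GM on `2(2-β) + 4α/(2-β)`), so `ρ̂₂`, which freezes `g` at its maximum, lies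
above `g`. Hence `ρ₂ ≤ g ≤ ρ̂₂`.
-/

noncomputable def rhoLow (α β : ℝ) : ℝ := 2 + 2 * β - 4 * α / (2 - β)

theorem rhoLow_two_sub_sqrt {α : ℝ} (hα : 0 < α) :
    rhoLow α (2 - Real.sqrt (2 * α)) = 6 - 4 * Real.sqrt (2 * α) := by
  have hs : 0 < Real.sqrt (2 * α) := Real.sqrt_pos.mpr (by positivity)
  have hs2 : Real.sqrt (2 * α) ^ 2 = 2 * α := Real.sq_sqrt (by positivity)
  unfold rhoLow
  rw [sub_sub_cancel]
  field_simp
  linear_combination 2 * hs2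

theorem rho2_le_rhoLow {α β : ℝ} (hα : 0 ≤ α) (hβ₀ : 0 < β) (hβ₁ : β ≤ 1) :
    rho2 α β ≤ rhoLow α β := by
  unfold rho2
  split_ifs
  · exact le_rfl
  set a := Real.sqrt α
  have ha : a ^ 2 = α := Real.sq_sqrt hα
  have h2β : 0 < 2 - β := by linarith
  have key : rhoLow α β - (8 * (1 - a) - 4 * (1 - a) ^ 2 / β)
      = 2 * (1 - β) * (β - 2 * (1 - a)) ^ 2 / (β * (2 - β)) := by
    unfold rhoLow
    rw [← ha]
    field_simp
    ring
  rw [← sub_nonneg, key]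
  have : 0 ≤ 1 - β := by linarith
  positivity

theorem rhoLow_le_rhoHat2 {α β : ℝ} (hα : 0 ≤ α) (hβ : β < 2) :
    rhoLow α β ≤ rhoHat2 α β := by
  unfold rhoHat2
  split_ifs
  · exact le_rfl
  set s := Real.sqrt (2 * α)
  have hs : s ^ 2 = 2 * α := Real.sq_sqrt (by positivity)
  have hu : 0 < 2 - β := by linarith
  have key : 6 - 4 * s - rhoLow α β = 2 * ((2 - β) - s) ^ 2 / (2 - β) := by
    unfold rhoLow
    field_simp
    linear_combination (-2) * hs
  rw [← sub_nonneg, key]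
  positivity

theorem statement_19 (α : ℝ) (hα : α ∈ Ioo (0 : ℝ) 1) :
    (2 + 2 * (2 - Real.sqrt (2 * α)) - 4 * α / (2 - (2 - Real.sqrt (2 * α)))
        = 6 - 4 * Real.sqrt (2 * α)) ∧
    (∀ β ∈ Ioo (0 : ℝ) 1, rho2 α β ≤ rhoHat2 α β) :=
  ⟨rhoLow_two_sub_sqrt hα.1, fun _ hβ =>
    (rho2_le_rhoLow hα.1.le hβ.1 hβ.2.le).trans (rhoLow_le_rhoHat2 hα.1.le (by linarith [hβ.2]))⟩
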